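/- arXiv:1711.04110 — 5 statements merged into one kernel-verified Lean document; each statement's English description precedes it below -/
import Mathlib

section
/- For every word w of length n over Â = {0,...,b}, the sum over all words u of length ℓ_n over A = {0,...,b−1} of the number of aligned occurrences of w in e_n(u) equals b^{ℓ_n}. -/
/-!
The word `w_n` is the concatenation of the `(b+1)^n` words `p` of length `n`, and `e_n` fills
each block `p` with its own slice of `u`. A block `p` is filled to equal `w` by exactly one
slice when `p` and `w` carry the symbol `b` at the same positions, and by no slice otherwise;
summing over `u`, such a block therefore contributes `b^(ℓ_n - k)` aligned occurrences, where `k`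
is the number of letters of `w` different from `b`. Exactly `b^k` blocks carry `b` at the same
positions as `w`, and `b^k · b^(ℓ_n - k) = b^ℓ_n`.
-/

open Filter Topology

/-- Number of aligned occurrences of `v` in `u` (at positions ≡ 1 mod |v|). -/
def alocc {α : Type*} [DecidableEq α] (u v : List α) : ℕ :=
  ((List.range (u.length / v.length)).filter
    (fun i => decide ((u.drop (i * v.length)).take v.length = v))).length

/-- Number of (not necessarily aligned, possibly overlapping) occurrences of `v` in `u`. -/
def occCount {α : Type*} [DecidableEq α] (u v : List α) : ℕ :=
  ((List.range (u.length + 1 - v.length)).filter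
    (fun i => decide ((u.drop i).take v.length = v))).length

/-- The `i`-th word of length `n` over `{0,...,b}` in lexicographic order
(the base-`b+1` digits of `i`, most significant first). -/
def lexWord (b n i : ℕ) : List (Fin (b + 1)) :=
  (List.range n).map (fun j => ⟨i / (b + 1) ^ (n - 1 - j) % (b + 1), Nat.mod_lt _ (Nat.succ_pos b)⟩)

/-- The Champernowne-like word `w_n`: the concatenation in lexicographic order of all
words of length `n` over the alphabet `{0,...,b}`. -/
def champ (b n : ℕ) : List (Fin (b + 1)) :=
  ((List.range ((b + 1) ^ n)).map (lexWord b n)).flatten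

/-- `ℓ_n`: the number of symbols of `w_n` different from `b`. -/
def elln (b n : ℕ) : ℕ := (champ b n).countP (fun x => decide ((x : ℕ) ≠ b))

/-- The reduction operator: removes all occurrences of the symbol `b`. -/
def red (b : ℕ) (v : List (Fin (b + 1))) : List (Fin b) :=
  v.filterMap (fun x => if h : (x : ℕ) < b then some ⟨(x : ℕ), h⟩ else none)

/-- The wildcard operator: replaces every symbol different from `b` by a wildcard.
`true` encodes the symbol `b` and `false` encodes the wildcard `⋆`. -/
def wc (b : ℕ) (v : List (Fin (b + 1))) : List Bool :=
  v.map (fun x => decide ((x : ℕ) = b))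

/-- Expansion of a word `v` over `{0,...,b-1}` along a pattern `p` over `{0,...,b}`:
positions where `p` has the symbol `b` get `b`, the other positions are filled
with the symbols of `v` in order. -/
def expandAux (b : ℕ) : List (Fin (b + 1)) → List (Fin b) → List (Fin (b + 1))
  | [], _ => []
  | c :: cs, v =>
    if (c : ℕ) = b then c :: expandAux b cs v
    else match v with
      | [] => []
      | x :: xs => x.castSucc :: expandAux b cs xs

def expandBlocks (b n : ℕ) : ℕ → List (Fin b) → List (Fin (b + 1))
  | 0, _ => []
  | k + 1, v =>
      expandAux b (champ b n) (v.take (elln b n)) ++ expandBlocks b n k (v.drop (elln b n))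

/-- The expansion `e_n`, defined blockwise on words whose length is a multiple of `ℓ_n`. -/
def expand (b n : ℕ) (v : List (Fin b)) : List (Fin (b + 1)) :=
  expandBlocks b n (v.length / elln b n) v

/-- The prefix of length `n` of an infinite word. -/
def pref {α : Type*} (u : ℕ → α) (n : ℕ) : List α := (List.range n).map u

def slotCount (b : ℕ) (p : List (Fin (b + 1))) : ℕ :=
  p.countP fun x : Fin (b + 1) => decide ((x : ℕ) ≠ b)

-- `elln` counts the letters of `champ b n` after coercing them to `ℕ`.
lemma elln_eq_slotCount (b n : ℕ) : elln b n = slotCount b (champ b n) := by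
  rw [elln, List.bind_eq_flatMap]
  erw [List.flatMap_pure_eq_map, List.countP_map]
  rfl

section Expansion

variable {b : ℕ}

@[simp] lemma wc_nil : wc b [] = [] := rfl

@[simp] lemma wc_cons (c : Fin (b + 1)) (v : List (Fin (b + 1))) :
    wc b (c :: v) = decide ((c : ℕ) = b) :: wc b v := rfl

@[simp] lemma red_nil : red b [] = [] := rfl

lemma red_cons (c : Fin (b + 1)) (v : List (Fin (b + 1))) :
    red b (c :: v) = if h : (c : ℕ) < b then ⟨c, h⟩ :: red b v else red b v := by
  by_cases h : (c : ℕ) < b <;> simp [red, h]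

lemma slotCount_cons (c : Fin (b + 1)) (p : List (Fin (b + 1))) :
    slotCount b (c :: p) = slotCount b p + if (c : ℕ) = b then 0 else 1 := by
  by_cases hc : (c : ℕ) = b <;> simp [slotCount, hc]

lemma slotCount_append (p q : List (Fin (b + 1))) :
    slotCount b (p ++ q) = slotCount b p + slotCount b q :=
  List.countP_append ..

lemma slotCount_eq_of_wc_eq {p w : List (Fin (b + 1))} (h : wc b p = wc b w) :
    slotCount b p = slotCount b w := by
  have key (v : List (Fin (b + 1))) : slotCount b v = (wc b v).count false := by
    induction v with
    | nil => rfl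
    | cons c v ih => by_cases hc : (c : ℕ) = b <;> simp [slotCount_cons, ih, hc]
  rw [key, key, h]

lemma length_red (w : List (Fin (b + 1))) : (red b w).length = slotCount b w := by
  induction w with
  | nil => rfl
  | cons c w ih =>
    rw [slotCount_cons, ← ih]
    by_cases hc : (c : ℕ) = b
    · simp [red_cons, hc]
    · simp [red_cons, show (c : ℕ) < b by omega, hc]

lemma eq_of_wc_eq_of_red_eq {v w : List (Fin (b + 1))} (hwc : wc b v = wc b w)
    (hred : red b v = red b w) : v = w := by
  induction v generalizing w with
  | nil => cases w <;> simp_all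
  | cons c v ih =>
    obtain _ | ⟨d, w⟩ := w
    · simp at hwc
    simp only [wc_cons, List.cons.injEq, decide_eq_decide] at hwc
    by_cases hc : (c : ℕ) = b
    · have hd : (d : ℕ) = b := hwc.1.mp hc
      simp only [red_cons, hc, hd, lt_irrefl, dite_false] at hred
      exact congrArg₂ _ (Fin.ext (hc.trans hd.symm)) (ih hwc.2 hred)
    · have hd : (d : ℕ) ≠ b := mt hwc.1.mpr hc
      simp only [red_cons, show (c : ℕ) < b by omega, show (d : ℕ) < b by omega, dite_true,
        List.cons.injEq, Fin.mk.injEq] at hred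
      exact congrArg₂ _ (Fin.ext hred.1) (ih hwc.2 hred.2)

lemma length_expandAux (p : List (Fin (b + 1))) (v : List (Fin b))
    (h : slotCount b p ≤ v.length) : (expandAux b p v).length = p.length := by
  induction p generalizing v with
  | nil => rfl
  | cons c p ih =>
    rw [slotCount_cons] at h
    by_cases hc : (c : ℕ) = b
    · simp [expandAux, hc, ih v (by simpa [hc] using h)]
    · obtain _ | ⟨x, v⟩ := v
      · simp [hc] at h
      · simp [expandAux, hc, ih v (by simpa [hc] using h)]

lemma wc_expandAux (p : List (Fin (b + 1))) (v : List (Fin b))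
    (h : slotCount b p ≤ v.length) : wc b (expandAux b p v) = wc b p := by
  induction p generalizing v with
  | nil => rfl
  | cons c p ih =>
    rw [slotCount_cons] at h
    by_cases hc : (c : ℕ) = b
    · simpa [expandAux, hc] using ih v (by simpa [hc] using h)
    · obtain _ | ⟨x, v⟩ := v
      · simp [hc] at h
      · simpa [expandAux, hc, x.isLt.ne] using ih v (by simpa [hc] using h)

lemma red_expandAux (p : List (Fin (b + 1))) (v : List (Fin b))
    (h : v.length = slotCount b p) : red b (expandAux b p v) = v := by
  induction p generalizing v with
  | nil => simp_all [slotCount, expandAux]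
  | cons c p ih =>
    rw [slotCount_cons] at h
    by_cases hc : (c : ℕ) = b
    · simpa [expandAux, red_cons, hc] using ih v (by simpa [hc] using h)
    · obtain _ | ⟨x, v⟩ := v
      · simp [hc] at h
      · simpa [expandAux, red_cons, hc] using ih v (by simpa [hc] using h)

lemma expandAux_append (p q : List (Fin (b + 1))) (v₁ v₂ : List (Fin b))
    (h : v₁.length = slotCount b p) :
    expandAux b (p ++ q) (v₁ ++ v₂) = expandAux b p v₁ ++ expandAux b q v₂ := by
  induction p generalizing v₁ with
  | nil => simp_all [slotCount, expandAux]
  | cons c p ih =>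
    rw [slotCount_cons] at h
    by_cases hc : (c : ℕ) = b
    · simpa [expandAux, hc] using ih v₁ (by simpa [hc] using h)
    · obtain _ | ⟨x, v₁⟩ := v₁
      · simp [hc] at h
      · simpa [expandAux, hc] using ih v₁ (by simpa [hc] using h)

lemma expandAux_eq_iff {p w : List (Fin (b + 1))} {v : List (Fin b)}
    (h : v.length = slotCount b p) :
    expandAux b p v = w ↔ wc b p = wc b w ∧ v = red b w := by
  constructor
  · rintro rfl
    exact ⟨(wc_expandAux p v h.ge).symm, (red_expandAux p v h).symm⟩
  · rintro ⟨hwc, rfl⟩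
    exact eq_of_wc_eq_of_red_eq (by rw [wc_expandAux p _ h.ge, hwc]) (red_expandAux p _ h)

end Expansion

section Alocc

variable {α : Type*} [DecidableEq α]

@[simp] lemma alocc_nil (w : List α) : alocc [] w = 0 := by
  simp [alocc]

lemma alocc_append {x y w : List α} (hx : x.length = w.length) (hw : 0 < w.length) :
    alocc (x ++ y) w = (if x = w then 1 else 0) + alocc y w := by
  have hlen : (x ++ y).length / w.length = y.length / w.length + 1 := by
    rw [List.length_append, hx, Nat.add_comm, Nat.add_div_right _ hw]
  have hshift (i : ℕ) : ((x ++ y).drop ((i + 1) * w.length)).take w.length =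
      (y.drop (i * w.length)).take w.length := by
    rw [Nat.succ_mul, Nat.add_comm, ← hx, ← List.drop_drop, List.drop_left]
  unfold alocc
  rw [hlen, List.range_succ_eq_map, List.filter_cons, List.filter_map]
  simp only [Nat.zero_mul, List.drop_zero, List.take_left' hx, Function.comp_def, hshift]
  split_ifs <;> simp_all [Nat.add_comm]

end Alocc

section Counting

variable {α : Type*} [Fintype α]

lemma sum_ite_ofFn_eq [DecidableEq α] {m : ℕ} (l : List α) :
    (∑ f : Fin m → α, if List.ofFn f = l then 1 else 0) = if l.length = m then 1 else 0 := by
  split_ifs with h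
  · subst h
    rw [Finset.sum_eq_single_of_mem (fun i => l[i]) (Finset.mem_univ _)]
    · simp
    · intro f _ hf
      rw [if_neg]
      contrapose hf
      rw [← List.ofFn_inj]
      simpa using hf
  · exact Finset.sum_eq_zero fun f _ => if_neg fun e => h (by rw [← e, List.length_ofFn])

lemma sum_ofFn_eq_sum_sum_append {M : Type*} [AddCommMonoid M] {K a c : ℕ} (hK : K = a + c)
    (F : List α → M) :
    ∑ u : Fin K → α, F (List.ofFn u) =
      ∑ v₁ : Fin a → α, ∑ v₂ : Fin c → α, F (List.ofFn v₁ ++ List.ofFn v₂) := by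
  subst hK
  rw [← Fintype.sum_prod_type']
  exact (Fintype.sum_equiv (Fin.appendEquiv a c) _ _
    fun x => by simp [Fin.appendEquiv, List.ofFn_fin_append]).symm

end Counting

section Blocks

variable {b : ℕ}

lemma sum_ite_expandAux_eq (p w : List (Fin (b + 1))) :
    (∑ v : Fin (slotCount b p) → Fin b, if expandAux b p (List.ofFn v) = w then 1 else 0) =
      if wc b p = wc b w then 1 else 0 := by
  simp_rw [expandAux_eq_iff List.length_ofFn]
  by_cases hwc : wc b p = wc b w
  · simp only [hwc, true_and, if_true]
    rw [sum_ite_ofFn_eq, if_pos (by rw [length_red, slotCount_eq_of_wc_eq hwc])]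
  · simp [hwc]

lemma sum_ite_wc_ofFn_eq (w : List (Fin (b + 1))) :
    (∑ f : Fin w.length → Fin (b + 1), if wc b (List.ofFn f) = wc b w then 1 else 0) =
      b ^ slotCount b w := by
  calc _ = ∑ f : Fin w.length → Fin (b + 1), ∑ v : Fin (slotCount b w) → Fin b,
          if expandAux b w (List.ofFn v) = List.ofFn f then 1 else 0 := by
        simp_rw [sum_ite_expandAux_eq, eq_comm]
    _ = ∑ v : Fin (slotCount b w) → Fin b, ∑ f : Fin w.length → Fin (b + 1),
          if List.ofFn f = expandAux b w (List.ofFn v) then 1 else 0 := by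
        rw [Finset.sum_comm]
        simp_rw [eq_comm]
    _ = ∑ v : Fin (slotCount b w) → Fin b, 1 := Finset.sum_congr rfl fun v _ => by
        rw [sum_ite_ofFn_eq, if_pos (length_expandAux w _ List.length_ofFn.ge)]
    _ = b ^ slotCount b w := by simp

-- Multiplied through by `b ^ slotCount b w`, so that no truncated subtraction is needed.
lemma sum_alocc_expandAux_flatten_mul (w : List (Fin (b + 1))) (hw : 0 < w.length)
    (P : List (List (Fin (b + 1)))) (hP : ∀ p ∈ P, p.length = w.length) :
    (∑ u : Fin (slotCount b P.flatten) → Fin b, alocc (expandAux b P.flatten (List.ofFn u)) w) *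
        b ^ slotCount b w =
      P.countP (fun p => wc b p = wc b w) * b ^ slotCount b P.flatten := by
  induction P with
  | nil => simp [expandAux, slotCount]
  | cons p P ih =>
    obtain ⟨hp, hP⟩ := List.forall_mem_cons.mp hP
    have hsplit : slotCount b (p :: P).flatten = slotCount b p + slotCount b P.flatten := by
      rw [List.flatten_cons, slotCount_append]
    have hblock (v₁ : Fin (slotCount b p) → Fin b) (v₂ : Fin (slotCount b P.flatten) → Fin b) :
        alocc (expandAux b (p :: P).flatten (List.ofFn v₁ ++ List.ofFn v₂)) w =
          (if expandAux b p (List.ofFn v₁) = w then 1 else 0) +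
            alocc (expandAux b P.flatten (List.ofFn v₂)) w := by
      rw [List.flatten_cons, expandAux_append _ _ _ _ List.length_ofFn]
      exact alocc_append (by rw [length_expandAux _ _ List.length_ofFn.ge, hp]) hw
    rw [sum_ofFn_eq_sum_sum_append hsplit fun l => alocc (expandAux b (p :: P).flatten l) w,
      hsplit]
    simp only [hblock, Finset.sum_add_distrib, Finset.sum_const, Finset.card_univ,
      Fintype.card_fun, Fintype.card_fin, smul_eq_mul, ← Finset.mul_sum, sum_ite_expandAux_eq]
    rw [add_mul, mul_assoc (b ^ slotCount b p), ih hP, List.countP_cons, pow_add]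
    by_cases hwc : wc b p = wc b w
    · simp only [hwc, slotCount_eq_of_wc_eq hwc, decide_true, if_true]
      ring
    · simp [hwc]
      ring

end Blocks

section LexWords

variable {b n : ℕ}

lemma lexWord_eq_ofFn (i : Fin ((b + 1) ^ n)) :
    lexWord b n i = List.ofFn fun j => finFunctionFinEquiv.symm i j.rev := by
  refine List.ext_getElem (by simp [lexWord]) fun j h _ => ?_
  simp only [lexWord, List.length_map, List.length_range] at h
  ext
  simp [lexWord, finFunctionFinEquiv_symm_apply_val, Fin.val_rev, Nat.sub_sub, Nat.add_comm 1 j]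

lemma countP_range_eq_sum (N : ℕ) (p : ℕ → Bool) :
    (List.range N).countP p = ∑ i : Fin N, if p i then 1 else 0 := by
  induction N with
  | zero => rfl
  | succ N ih =>
    rw [List.range_succ, List.countP_append, Fin.sum_univ_castSucc, ih]
    simp [List.countP_singleton]

lemma countP_lexWord_wc_eq (w : List (Fin (b + 1))) :
    ((List.range ((b + 1) ^ w.length)).map (lexWord b w.length)).countP
        (fun p => wc b p = wc b w) = b ^ slotCount b w := by
  rw [List.countP_map, countP_range_eq_sum, ← sum_ite_wc_ofFn_eq]
  refine Fintype.sum_equiv (finFunctionFinEquiv.symm.trans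
    (Equiv.arrowCongr Fin.revPerm (Equiv.refl _))) _ _ fun i => ?_
  simp only [Function.comp_apply, lexWord_eq_ofFn, decide_eq_true_eq]
  rfl

lemma elln_pos (hb : 0 < b) (hn : 0 < n) : 0 < elln b n := by
  have hzero : (0 : Fin (b + 1)) ∈ champ b n :=
    List.mem_flatten.mpr ⟨lexWord b n 0,
      List.mem_map.mpr ⟨0, List.mem_range.mpr (pow_pos (Nat.succ_pos b) n), rfl⟩,
      List.mem_map.mpr ⟨0, List.mem_range.mpr hn, by simp⟩⟩
  rw [elln_eq_slotCount]
  exact List.countP_pos_iff.mpr ⟨0, hzero, by simp [hb.ne]⟩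

lemma expand_eq_expandAux_champ (hℓ : 0 < elln b n) {u : List (Fin b)}
    (hu : u.length = elln b n) : expand b n u = expandAux b (champ b n) u := by
  simp [expand, expandBlocks, hu, Nat.div_self hℓ, List.take_of_length_le hu.le]

end LexWords

theorem stmt6 (b n : ℕ) (hb : 0 < b) (hn : 0 < n)
    (w : List (Fin (b + 1))) (hw : w.length = n) :
    ∑ u : Fin (elln b n) → Fin b, alocc (expand b n (List.ofFn u)) w = b ^ (elln b n) := by
  subst hw
  have hblocks : ∀ p ∈ (List.range ((b + 1) ^ w.length)).map (lexWord b w.length),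
      p.length = w.length := by simp [lexWord]
  have key := sum_alocc_expandAux_flatten_mul w hn _ hblocks
  rw [countP_lexWord_wc_eq, ← champ, ← elln_eq_slotCount] at key
  simp_rw [expand_eq_expandAux_champ (elln_pos hb hn) List.length_ofFn]
  exact Nat.eq_of_mul_eq_mul_right (pow_pos hb _) (key.trans (mul_comm _ _))
end

section
/- Let C be an alphabet of size k, and m, n ∈ ℕ. If a word v over C of length a multiple of mn satisfies Δ_{C,mn}(v) < ε, then Δ_{C,n}(v) < k^{(m−1)n}·ε. -/
open Filter Topology

/-!
Cut `v` into its aligned blocks of length `m * n`; each block is the concatenation of `m` aligned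
windows of length `n`. Counting aligned occurrences of a word `w` of length `n` block by block
gives `alocc v w = ∑ u, alocc v u * alocc u w` over the words `u` of length `m * n`, and fixing
one of the `m` windows of `u` leaves `(m - 1) * n` free letters, so
`∑ u, alocc u w = m * k ^ ((m - 1) * n)`. Hence the deviation of the frequency of `w` from
`1 / k ^ n` is the average, with weights `alocc u w / m` of total mass `k ^ ((m - 1) * n)`, of the
deviations of the frequencies of the words `u` from `1 / k ^ (m * n)`.
-/

open Finset

lemma Nat.div_eq_div_mul_mul_of_mul_dvd {a m n : ℕ} (h : m * n ∣ a) : a / n = a / (m * n) * m := by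
  rw [Nat.mul_comm m n] at h ⊢
  rw [← Nat.div_div_eq_div_mul, Nat.div_mul_cancel (Nat.dvd_div_of_mul_dvd h)]

lemma List.exists_ofFn_eq_of_length_eq {α : Type*} {l : List α} {ℓ : ℕ} (h : l.length = ℓ) :
    ∃ x : Fin ℓ → α, List.ofFn x = l := by
  subst h
  exact ⟨_, List.ofFn_getElem⟩

lemma Finset.sum_range_mul {M : Type*} [AddCommMonoid M] (f : ℕ → M) (N m : ℕ) :
    ∑ i ∈ range (N * m), f i = ∑ q ∈ range N, ∑ r ∈ range m, f (q * m + r) := by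
  induction N with
  | zero => simp
  | succ N ih => rw [Nat.succ_mul, sum_range_add, ih, sum_range_succ]

lemma Fintype.card_filter_apply_eq {ι β : Type*} [Fintype ι] [DecidableEq ι] [Fintype β]
    [DecidableEq β] (i : ι) (b : β) :
    #{g : ι → β | g i = b} = Fintype.card β ^ (Fintype.card ι - 1) := by
  rw [← Fintype.piFinset_univ, Fintype.card_filter_piFinset_const_eq_of_mem _ _ (mem_univ b),
    card_univ]

lemma abs_sum_mul_lt {ι K : Type*} [Field K] [LinearOrder K] [IsStrictOrderedRing K]
    (s : Finset ι) {c x : ι → K} {ε : K} (hc : ∀ i ∈ s, 0 ≤ c i) (hpos : 0 < ∑ i ∈ s, c i)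
    (hx : ∀ i ∈ s, |x i| < ε) :
    |∑ i ∈ s, c i * x i| < (∑ i ∈ s, c i) * ε := by
  obtain ⟨j, hj, hcj⟩ := exists_lt_of_sum_lt (f := fun _ => (0 : K)) (by simpa using hpos)
  calc |∑ i ∈ s, c i * x i| ≤ ∑ i ∈ s, c i * |x i| := by
        refine (abs_sum_le_sum_abs _ _).trans_eq (sum_congr rfl fun i hi => ?_)
        rw [abs_mul, abs_of_nonneg (hc i hi)]
    _ < ∑ i ∈ s, c i * ε := by
        refine sum_lt_sum (fun i hi => ?_) ⟨j, hj, ?_⟩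
        · exact mul_le_mul_of_nonneg_left (hx i hi).le (hc i hi)
        · exact mul_lt_mul_of_pos_left (hx j hj) hcj
    _ = (∑ i ∈ s, c i) * ε := (sum_mul _ _ _).symm

section AlignedBlocks

variable {α : Type*}

def alignedBlock (u : List α) (ℓ i : ℕ) : List α := (u.drop (i * ℓ)).take ℓ

lemma length_alignedBlock {u : List α} {ℓ i : ℕ} (h : (i + 1) * ℓ ≤ u.length) :
    (alignedBlock u ℓ i).length = ℓ := by
  rw [add_mul, one_mul] at h
  simp only [alignedBlock, List.length_take, List.length_drop]
  omega

lemma alignedBlock_alignedBlock (u : List α) {m r : ℕ} (hr : r < m) (n q : ℕ) :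
    alignedBlock (alignedBlock u (m * n) q) n r = alignedBlock u n (q * m + r) := by
  have hrn : r * n + n ≤ m * n := by nlinarith
  rw [alignedBlock, alignedBlock, List.drop_take, List.take_take, List.drop_drop,
    show min n (m * n - r * n) = n by omega, alignedBlock, add_mul, mul_assoc]

lemma alignedBlock_ofFn_uncurry {m n : ℕ} (g : Fin m → Fin n → α) (r : Fin m) :
    alignedBlock (List.ofFn fun i => Function.uncurry g (finProdFinEquiv.symm i)) n r
      = List.ofFn (g r) := by
  have hrn : (r : ℕ) * n + n ≤ m * n := by nlinarith [r.2]
  apply List.ext_getElem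
  · simp only [alignedBlock, List.length_take, List.length_drop, List.length_ofFn]
    omega
  · intro j h₁ h₂
    have hj : j < n := by simpa using h₂
    simp only [alignedBlock, List.getElem_take, List.getElem_drop, List.getElem_ofFn,
      finProdFinEquiv_symm_apply, Function.uncurry_apply_pair]
    congr 1
    · ext
      simp only [Fin.divNat]
      rw [Nat.add_comm, Nat.add_mul_div_right _ _ (by omega), Nat.div_eq_of_lt hj, zero_add]
    · ext
      simp [Fin.modNat, Nat.mod_eq_of_lt hj]

variable [DecidableEq α]

lemma alocc_eq_card_filter (u w : List α) :
    alocc u w = #{i ∈ range (u.length / w.length) | alignedBlock u w.length i = w} := by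
  rw [alocc, Finset.card_def, Finset.filter_val, Finset.range_val, Multiset.range,
    Multiset.filter_coe, Multiset.coe_card]
  rfl

lemma alocc_eq_sum_alocc_alignedBlock {u w : List α} {m : ℕ} (hw : 0 < w.length)
    (hu : m * w.length ∣ u.length) :
    alocc u w = ∑ q ∈ range (u.length / (m * w.length)),
      alocc (alignedBlock u (m * w.length) q) w := by
  rw [alocc_eq_card_filter, Nat.div_eq_div_mul_mul_of_mul_dvd hu, card_filter, sum_range_mul]
  refine sum_congr rfl fun q hq => ?_
  have hblock : (alignedBlock u (m * w.length) q).length = m * w.length :=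
    length_alignedBlock (Nat.mul_le_of_le_div _ _ _ (mem_range.1 hq))
  rw [alocc_eq_card_filter, hblock, Nat.mul_div_cancel _ hw, card_filter]
  exact sum_congr rfl fun r hr => by rw [alignedBlock_alignedBlock u (mem_range.1 hr)]

lemma sum_alignedBlock_eq_sum_alocc_smul [Fintype α] {M : Type*} [AddCommMonoid M]
    (u : List α) (ℓ : ℕ) (f : List α → M) :
    ∑ q ∈ range (u.length / ℓ), f (alignedBlock u ℓ q)
      = ∑ x : Fin ℓ → α, alocc u (List.ofFn x) • f (List.ofFn x) := by
  have hmaps :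
      ∀ q ∈ range (u.length / ℓ), alignedBlock u ℓ q ∈ univ.image (List.ofFn (n := ℓ)) := by
    intro q hq
    obtain ⟨x, hx⟩ := List.exists_ofFn_eq_of_length_eq
      (length_alignedBlock (Nat.mul_le_of_le_div _ _ _ (mem_range.1 hq)))
    exact mem_image.2 ⟨x, mem_univ _, hx⟩
  rw [← sum_fiberwise_of_maps_to' hmaps, sum_image fun x _ y _ h => List.ofFn_injective h]
  refine sum_congr rfl fun x _ => ?_
  rw [sum_const, alocc_eq_card_filter, List.length_ofFn]

lemma alocc_eq_sum_alocc_mul_alocc [Fintype α] {u w : List α} {m n : ℕ} (hw : w.length = n)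
    (hn : 0 < n) (hu : m * n ∣ u.length) :
    alocc u w = ∑ x : Fin (m * n) → α, alocc u (List.ofFn x) * alocc (List.ofFn x) w := by
  subst hw
  rw [alocc_eq_sum_alocc_alignedBlock hn hu, sum_alignedBlock_eq_sum_alocc_smul u _ (alocc · w)]
  rfl

lemma sum_alocc_ofFn [Fintype α] {w : List α} {n : ℕ} (hw : w.length = n) (hn : 0 < n) (m : ℕ) :
    ∑ x : Fin (m * n) → α, alocc (List.ofFn x) w = m * Fintype.card α ^ ((m - 1) * n) := by
  obtain ⟨y, rfl⟩ := List.exists_ofFn_eq_of_length_eq hw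
  -- a word of length `m * n` is a sequence of `m` windows of length `n`
  let e : (Fin m → Fin n → α) ≃ (Fin (m * n) → α) :=
    (Equiv.curry _ _ _).symm.trans (finProdFinEquiv.arrowCongr (Equiv.refl α))
  have he (g : Fin m → Fin n → α) : e g = fun i => Function.uncurry g (finProdFinEquiv.symm i) :=
    rfl
  have hocc (g : Fin m → Fin n → α) : alocc (List.ofFn (e g)) (List.ofFn y) = #{r | g r = y} := by
    rw [alocc_eq_card_filter, List.length_ofFn, List.length_ofFn, Nat.mul_div_cancel _ hn,
      card_filter, card_filter, ← Fin.sum_univ_eq_sum_range]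
    simp only [he, alignedBlock_ofFn_uncurry, List.ofFn_inj]
  simp only [← e.sum_comp, hocc, card_filter]
  rw [sum_comm]
  simp only [← card_filter, Fintype.card_filter_apply_eq, sum_const, card_univ, Fintype.card_fin,
    Fintype.card_fun, smul_eq_mul, ← pow_mul, mul_comm n]

lemma alocc_div_sub_eq_sum [Fintype α] [Nonempty α] {u w : List α} {m n : ℕ}
    (hw : w.length = n) (hm : 0 < m) (hn : 0 < n) (hu : m * n ∣ u.length) :
    (alocc u w : ℝ) / ((u.length / n : ℕ) : ℝ) - 1 / (Fintype.card α : ℝ) ^ n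
      = (∑ x : Fin (m * n) → α, (alocc (List.ofFn x) w : ℝ) *
          ((alocc u (List.ofFn x) : ℝ) / ((u.length / (m * n) : ℕ) : ℝ)
            - 1 / (Fintype.card α : ℝ) ^ (m * n))) / m := by
  have hocc : (alocc u w : ℝ)
      = ∑ x : Fin (m * n) → α, (alocc (List.ofFn x) w : ℝ) * alocc u (List.ofFn x) := by
    rw [alocc_eq_sum_alocc_mul_alocc hw hn hu]
    push_cast
    exact sum_congr rfl fun x _ => mul_comm _ _
  have hsum : ∑ x : Fin (m * n) → α, (alocc (List.ofFn x) w : ℝ)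
      = m * (Fintype.card α : ℝ) ^ ((m - 1) * n) := by
    exact_mod_cast sum_alocc_ofFn hw hn m
  have hpow : (Fintype.card α : ℝ) ^ (m * n)
      = (Fintype.card α : ℝ) ^ ((m - 1) * n) * (Fintype.card α : ℝ) ^ n := by
    rw [← pow_add, ← add_one_mul, Nat.sub_one_add_one hm.ne']
  simp only [mul_sub, sum_sub_distrib, ← sum_mul, ← mul_div_assoc, ← sum_div,
    ← hocc, hsum, Nat.div_eq_div_mul_mul_of_mul_dvd hu, hpow]
  push_cast
  field_simp

end AlignedBlocks

theorem stmt8_general (k m n : ℕ) (hk : 0 < k) (hm : 0 < m) (hn : 0 < n)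
    (v : List (Fin k)) (hv : (m * n) ∣ v.length) (ε : ℝ)
    (h : ∀ w : List (Fin k), w.length = m * n →
      |(alocc v w : ℝ) / ((v.length / (m * n) : ℕ) : ℝ) - 1 / (k : ℝ) ^ (m * n)| < ε) :
    ∀ w : List (Fin k), w.length = n →
      |(alocc v w : ℝ) / ((v.length / n : ℕ) : ℝ) - 1 / (k : ℝ) ^ n|
        < (k : ℝ) ^ ((m - 1) * n) * ε := by
  intro w hw
  have : Nonempty (Fin k) := ⟨⟨0, hk⟩⟩
  have hsum : ∑ x : Fin (m * n) → Fin k, (alocc (List.ofFn x) w : ℝ)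
      = m * (k : ℝ) ^ ((m - 1) * n) := by
    exact_mod_cast (sum_alocc_ofFn hw hn m).trans (by rw [Fintype.card_fin])
  have key := alocc_div_sub_eq_sum hw hm hn hv
  rw [Fintype.card_fin] at key
  rw [key, abs_div, Nat.abs_cast, div_lt_iff₀ (by positivity)]
  calc _ < (∑ x : Fin (m * n) → Fin k, (alocc (List.ofFn x) w : ℝ)) * ε :=
        abs_sum_mul_lt _ (fun _ _ => Nat.cast_nonneg _) (by rw [hsum]; positivity)
          fun x _ => h _ List.length_ofFn
    _ = _ := by rw [hsum]; ring

theorem stmt8 (k m n : ℕ) (hk : 0 < k) (hm : 0 < m) (hn : 0 < n)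
    (v : List (Fin k)) (hv : (m * n) ∣ v.length) (ε : ℝ) (hε : 0 < ε)
    (h : ∀ w : List (Fin k), w.length = m * n →
      |(alocc v w : ℝ) / ((v.length / (m * n) : ℕ) : ℝ) - 1 / (k : ℝ) ^ (m * n)| < ε) :
    ∀ w : List (Fin k), w.length = n →
      |(alocc v w : ℝ) / ((v.length / n : ℕ) : ℝ) - 1 / (k : ℝ) ^ n|
        < (k : ℝ) ^ ((m - 1) * n) * ε :=
  stmt8_general k m n hk hm hn v hv ε h
end

section
/- Let C be an alphabet and n ∈ ℕ, and let u, v be words over C with lengths multiples of n. If Δ_{C,n}(u) < ε and Δ_{C,n}(uv) < ε, then Δ_{C,n}(v) < ((|uv|+|u|)/|v|)·ε. -/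
open Filter Topology

/-! Aligned occurrences are additive over `u ++ v` because `|u|` is a multiple of `n`. With
`A = |u|/n`, `B = |v|/n` and `p = k⁻ⁿ`, the count `b` in `v` is the count in `u ++ v` minus
the count `a` in `u`, so `|b - Bp| ≤ |a + b - (A + B)p| + |a - Ap| < (2A + B)ε`; dividing by `B`
gives the claim, as `(|uv| + |u|)/|v| = (2A + B)/B`. -/

theorem alocc_le_length_div {α : Type*} [DecidableEq α] (u w : List α) :
    alocc u w ≤ u.length / w.length :=
  (List.length_filter_le _ _).trans_eq List.length_range

theorem alocc_append_of_dvd {α : Type*} [DecidableEq α] (u v w : List α)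
    (hu : w.length ∣ u.length) : alocc (u ++ v) w = alocc u w + alocc v w := by
  unfold alocc
  rw [List.length_append, Nat.add_div_of_dvd_right hu, List.range_add, List.filter_append,
    List.length_append, List.filter_map, List.length_map]
  congr 2
  · refine List.filter_congr fun i hi => ?_
    have hi : i * w.length + w.length ≤ u.length := by
      rw [← Nat.succ_mul]
      exact (Nat.le_div_iff_mul_le (Nat.pos_of_ne_zero fun h => by simp [h] at hi)).mp
        (List.mem_range.mp hi)
    rw [List.drop_append_of_le_length (by omega), List.take_append_of_le_length
      (by rw [List.length_drop]; omega)]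
  · refine List.filter_congr fun i _ => ?_
    rw [Function.comp_apply, add_mul, Nat.div_mul_cancel hu, List.drop_append,
      Nat.add_sub_cancel_left, List.drop_eq_nil_of_le (Nat.le_add_right _ _), List.nil_append]

theorem abs_sub_mul_le_mul_of_abs_div_sub_lt {a A p ε : ℝ} (ha : 0 ≤ a) (haA : a ≤ A)
    (h : |a / A - p| < ε) : |a - A * p| ≤ A * ε := by
  rcases (ha.trans haA).eq_or_lt with hA | hA
  · -- `h` says nothing here (`a / 0 = 0`), but `a ≤ A = 0` pins `a`.
    have : a = 0 := le_antisymm (hA ▸ haA) ha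
    simp [← hA, this]
  · calc |a - A * p| = |A * (a / A - p)| := by rw [mul_sub, mul_div_cancel₀ _ hA.ne']
      _ = A * |a / A - p| := by rw [abs_mul, abs_of_pos hA]
      _ ≤ A * ε := by gcongr

theorem abs_div_sub_lt_of_abs_add_div_sub_lt {a b A B p ε : ℝ} (hA : 0 ≤ A) (hB : 0 < B)
    (ha : |a - A * p| ≤ A * ε) (hab : |(a + b) / (A + B) - p| < ε) :
    |b / B - p| < (2 * A + B) / B * ε := by
  have hAB : 0 < A + B := by linarith
  have hab' : |a + b - (A + B) * p| < (A + B) * ε := by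
    rw [← mul_div_cancel₀ (a + b) hAB.ne', ← mul_sub, abs_mul, abs_of_pos hAB]
    exact mul_lt_mul_of_pos_left hab hAB
  have hb : |b - B * p| < (2 * A + B) * ε := calc
    |b - B * p| = |(a + b - (A + B) * p) - (a - A * p)| := by ring_nf
    _ ≤ |a + b - (A + B) * p| + |a - A * p| := abs_sub _ _
    _ < (2 * A + B) * ε := by linarith
  rw [show b / B - p = (b - B * p) / B by field_simp, abs_div, abs_of_pos hB,
    div_mul_eq_mul_div]
  exact div_lt_div_of_pos_right hb hB

theorem stmt9_general (k n : ℕ) (u v : List (Fin k))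
    (hu : n ∣ u.length) (hv : n ∣ v.length) (hvne : v ≠ []) (ε : ℝ)
    (h1 : ∀ w : List (Fin k), w.length = n →
      |(alocc u w : ℝ) / ((u.length / n : ℕ) : ℝ) - 1 / (k : ℝ) ^ n| < ε)
    (h2 : ∀ w : List (Fin k), w.length = n →
      |(alocc (u ++ v) w : ℝ) / (((u ++ v).length / n : ℕ) : ℝ) - 1 / (k : ℝ) ^ n| < ε) :
    ∀ w : List (Fin k), w.length = n →
      |(alocc v w : ℝ) / ((v.length / n : ℕ) : ℝ) - 1 / (k : ℝ) ^ n|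
        < ((((u ++ v).length + u.length : ℕ) : ℝ) / (v.length : ℝ)) * ε := by
  intro w hw
  have hv0 : 0 < v.length := List.length_pos_iff.mpr hvne
  have hn : 0 < n := Nat.pos_of_dvd_of_pos hv hv0
  set A := u.length / n
  set B := v.length / n
  have hBpos : 0 < B := Nat.div_pos (Nat.le_of_dvd hv0 hv) hn
  have hratio : ((((u ++ v).length + u.length : ℕ) : ℝ) / (v.length : ℝ))
      = (2 * A + B) / B := by
    have hn' : (n : ℝ) ≠ 0 := by positivity
    have hu' : u.length = A * n := (Nat.div_mul_cancel hu).symm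
    have hv' : v.length = B * n := (Nat.div_mul_cancel hv).symm
    rw [List.length_append, hu', hv']
    push_cast
    field_simp
    ring
  have ha := abs_sub_mul_le_mul_of_abs_div_sub_lt (Nat.cast_nonneg _)
    (by exact_mod_cast hw ▸ alocc_le_length_div u w) (h1 w hw)
  have hab := h2 w hw
  rw [alocc_append_of_dvd u v w (hw ▸ hu), List.length_append,
    Nat.add_div_of_dvd_right hu] at hab
  push_cast at hab
  rw [hratio]
  exact abs_div_sub_lt_of_abs_add_div_sub_lt (Nat.cast_nonneg _) (by exact_mod_cast hBpos) ha hab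

theorem stmt9 (k n : ℕ) (hk : 0 < k) (hn : 0 < n) (u v : List (Fin k))
    (hu : n ∣ u.length) (hv : n ∣ v.length) (hvne : v ≠ []) (ε : ℝ)
    (h1 : ∀ w : List (Fin k), w.length = n →
      |(alocc u w : ℝ) / ((u.length / n : ℕ) : ℝ) - 1 / (k : ℝ) ^ n| < ε)
    (h2 : ∀ w : List (Fin k), w.length = n →
      |(alocc (u ++ v) w : ℝ) / (((u ++ v).length / n : ℕ) : ℝ) - 1 / (k : ℝ) ^ n| < ε) :
    ∀ w : List (Fin k), w.length = n →
      |(alocc v w : ℝ) / ((v.length / n : ℕ) : ℝ) - 1 / (k : ℝ) ^ n|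
        < ((((u ++ v).length + u.length : ℕ) : ℝ) / (v.length : ℝ)) * ε :=
  stmt9_general k n u v hu hv hvne ε h1 h2
end

section
/- (Hot Spot Lemma) An infinite word x over a finite alphabet A is normal if and only if there exists a positive constant C such that for every length ℓ and every word u of length ℓ, limsup_{n→∞} occ(x[1,n], u)/n < C/|A|^ℓ. -/
open Filter Topology

/-!
Both directions compare occurrences of words with aligned occurrences of longer blocks.

If `x` is normal and `|u| = ℓ`, cut `x` into blocks of length `L = ℓ |A|^ℓ`. By normality the
blocks are asymptotically equidistributed, so a block contains on average
`(L - ℓ + 1) / |A|^ℓ ≤ ℓ` occurrences of `u`, while the occurrences straddling two blocks number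
at most `ℓ` per block; this gives `limsup occ(x[1,n], u) / n ≤ 6 / |A|^ℓ`.

Conversely, group the aligned `t`-blocks of `x` into superblocks of `m` consecutive `t`-blocks.
Call a superblock bad if the proportion of its `t`-blocks equal to `u` is more than `ε` away
from `|A|^(-t)`. A fourth moment bound shows that at most `3 |A|^(mt) / (ε^4 m^2)` of the
`|A|^(mt)` superblocks are bad, and the hot spot condition lets each of them occur with
frequency at most `C m t / |A|^(mt)`; hence bad superblocks have frequency `O(1 / m)`, and the
frequency of aligned occurrences of `u` is `|A|^(-t) + O(ε)` along multiples of `m`. This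
suffices, as the number of aligned occurrences grows by at most one per block.
-/

open Finset Filter Topology Asymptotics

namespace List

variable {α : Type*}

lemma take_drop_append_of_add_le {w₁ w₂ : List α} {i n : ℕ} (h : i + n ≤ w₁.length) :
    ((w₁ ++ w₂).drop i).take n = (w₁.drop i).take n := by
  rw [List.drop_append_of_le_length (by omega), List.take_append_of_le_length (by simp; omega)]

lemma drop_append_of_length_le {w₁ w₂ : List α} {i : ℕ} (h : w₁.length ≤ i) :
    (w₁ ++ w₂).drop i = w₂.drop (i - w₁.length) := by
  rw [List.drop_append, List.drop_of_length_le h, List.nil_append]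

end List

lemma sum_pi_fin_succ {V M : Type*} [Fintype V] [AddCommMonoid M] {m : ℕ}
    (F : (Fin (m + 1) → V) → M) : ∑ ω, F ω = ∑ v, ∑ ω : Fin m → V, F (Fin.cons v ω) := by
  rw [← (Fin.consEquiv fun _ => V).sum_comp, Fintype.sum_prod_type]
  rfl

lemma abs_sum_apply_le {V : Type*} {Y : V → ℝ} (hY1 : ∀ v, |Y v| ≤ 1) {m : ℕ} (ω : Fin m → V) :
    |∑ s, Y (ω s)| ≤ m :=
  calc |∑ s, Y (ω s)| ≤ ∑ s, |Y (ω s)| := abs_sum_le_sum_abs _ _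
    _ ≤ ∑ _s : Fin m, (1 : ℝ) := sum_le_sum fun s _ => hY1 _
    _ = m := by simp

section FourthMoment

variable {V : Type*} [Fintype V] {Y : V → ℝ}

lemma sum_pow_le_card (hY1 : ∀ v, |Y v| ≤ 1) {j : ℕ} (hj : Even j) :
    ∑ v, Y v ^ j ≤ Fintype.card V := by
  calc ∑ v, Y v ^ j ≤ ∑ _v : V, (1 : ℝ) := sum_le_sum fun v _ =>
        (hj.pow_abs (Y v)).symm.trans_le (pow_le_one₀ (abs_nonneg _) (hY1 v))
    _ = Fintype.card V := by simp

variable (hY : ∑ v, Y v = 0)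
include hY

lemma sum_sum_apply_eq_zero (m : ℕ) : ∑ ω : Fin m → V, ∑ s, Y (ω s) = 0 := by
  induction m with
  | zero => simp
  | succ m ih =>
    rw [sum_pi_fin_succ]
    simp [Fin.sum_univ_succ, sum_add_distrib, ih, ← mul_sum, hY]

variable (hY1 : ∀ v, |Y v| ≤ 1)
include hY1

lemma sum_sq_sum_apply_le (m : ℕ) :
    ∑ ω : Fin m → V, (∑ s, Y (ω s)) ^ 2 ≤ m * (Fintype.card V : ℝ) ^ m := by
  induction m with
  | zero => simp
  | succ m ih =>
    rw [sum_pi_fin_succ]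
    simp only [Fin.sum_univ_succ, Fin.cons_zero, Fin.cons_succ, add_sq, sum_add_distrib,
      ← mul_sum, sum_const, card_univ, Fintype.card_fun, Fintype.card_fin,
      nsmul_eq_mul, sum_sum_apply_eq_zero hY, mul_zero, add_zero]
    have hN : (0 : ℝ) ≤ Fintype.card V := Nat.cast_nonneg _
    have h₁ := mul_le_mul_of_nonneg_left (sum_pow_le_card hY1 even_two) (pow_nonneg hN m)
    have h₂ := mul_le_mul_of_nonneg_left ih hN
    push_cast
    rw [pow_succ]
    linarith

lemma sum_pow_four_sum_apply_le (m : ℕ) :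
    ∑ ω : Fin m → V, (∑ s, Y (ω s)) ^ 4 ≤ 3 * m ^ 2 * (Fintype.card V : ℝ) ^ m := by
  induction m with
  | zero => simp
  | succ m ih =>
    rw [sum_pi_fin_succ]
    -- summing over the new coordinate kills the terms linear in `Y v` or in the old sum
    have hexpand (a b : ℝ) :
        (a + b) ^ 4 = a ^ 4 + 4 * a ^ 3 * b + 6 * a ^ 2 * b ^ 2 + 4 * a * b ^ 3 + b ^ 4 := by
      ring
    simp only [Fin.sum_univ_succ, Fin.cons_zero, Fin.cons_succ, hexpand, sum_add_distrib,
      ← mul_sum, ← sum_mul, sum_const, card_univ, Fintype.card_fun, Fintype.card_fin,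
      nsmul_eq_mul, sum_sum_apply_eq_zero hY, hY, mul_zero, zero_mul, add_zero]
    have hN : (0 : ℝ) ≤ Fintype.card V := Nat.cast_nonneg _
    have h₁ := mul_le_mul_of_nonneg_left (sum_pow_le_card hY1 (by decide : Even 4))
      (pow_nonneg hN m)
    have h₂ := mul_le_mul (sum_pow_le_card hY1 even_two) (sum_sq_sum_apply_le hY hY1 m)
      (sum_nonneg fun ω _ => sq_nonneg _) hN
    have h₃ := mul_le_mul_of_nonneg_left ih hN
    have h₄ := mul_nonneg (pow_nonneg hN m) hN
    push_cast
    rw [pow_succ (Fintype.card V : ℝ) m]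
    linarith

lemma card_filter_lt_abs_sum_apply_le {m : ℕ} (hm : 0 < m) {ε : ℝ} (hε : 0 < ε) :
    (#{ω : Fin m → V | ε * m < |∑ s, Y (ω s)|} : ℝ)
      ≤ 3 * (Fintype.card V : ℝ) ^ m / (ε ^ 4 * m ^ 2) := by
  set B : Finset (Fin m → V) := {ω | ε * m < |∑ s, Y (ω s)|}
  have hm' : (0 : ℝ) < m := Nat.cast_pos.2 hm
  have hmarkov : #B • (ε * m) ^ 4 ≤ ∑ ω ∈ B, (∑ s, Y (ω s)) ^ 4 :=
    card_nsmul_le_sum B (fun ω => (∑ s, Y (ω s)) ^ 4) _ fun ω hω => by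
      rw [← (by decide : Even 4).pow_abs (∑ s, Y (ω s))]
      exact pow_le_pow_left₀ (by positivity) (mem_filter.1 hω).2.le 4
  have htotal : ∑ ω ∈ B, (∑ s, Y (ω s)) ^ 4 ≤ ∑ ω : Fin m → V, (∑ s, Y (ω s)) ^ 4 :=
    sum_le_sum_of_subset_of_nonneg (subset_univ B) fun ω _ _ => by positivity
  have hbound := (hmarkov.trans htotal).trans (sum_pow_four_sum_apply_le hY hY1 m)
  rw [nsmul_eq_mul] at hbound
  rw [le_div_iff₀ (by positivity)]
  refine le_of_mul_le_mul_right ?_ (pow_pos hm' 2)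
  calc (#B : ℝ) * (ε ^ 4 * m ^ 2) * m ^ 2 = #B * (ε * m) ^ 4 := by ring
    _ ≤ 3 * m ^ 2 * (Fintype.card V : ℝ) ^ m := hbound
    _ = _ := by ring

end FourthMoment

lemma abs_sub_le_of_abs_succ_sub_le {b : ℕ → ℝ} (hb : ∀ n, |b (n + 1) - b n| ≤ 1) (a d : ℕ) :
    |b (a + d) - b a| ≤ d := by
  induction d with
  | zero => simp
  | succ d ih =>
    calc |b (a + (d + 1)) - b a| ≤ |b (a + d + 1) - b (a + d)| + |b (a + d) - b a| :=
          abs_sub_le _ _ _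
      _ ≤ 1 + d := add_le_add (hb _) ih
      _ = (d + 1 : ℕ) := by push_cast; ring

lemma isLittleO_natCast_of_multiples {b : ℕ → ℝ} (hb : ∀ n, |b (n + 1) - b n| ≤ 1)
    (hmul : ∀ ε > 0, ∃ m > 0, ∀ᶠ q in atTop, |b (m * q)| ≤ ε * (m * q : ℕ)) :
    b =o[atTop] (fun n => (n : ℝ)) := by
  refine isLittleO_iff.2 fun ε hε => ?_
  obtain ⟨m, hm, hq⟩ := hmul (ε / 2) (half_pos hε)
  filter_upwards [(Nat.tendsto_div_const_atTop hm.ne').eventually hq,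
    tendsto_natCast_atTop_atTop.eventually_ge_atTop (2 * m / ε)] with n hn hnm
  have hlip := abs_sub_le_of_abs_succ_sub_le hb (m * (n / m)) (n % m)
  rw [Nat.div_add_mod n m] at hlip
  have hmod : ((n % m : ℕ) : ℝ) ≤ m := by exact_mod_cast (Nat.mod_lt n hm).le
  have hmq : ((m * (n / m) : ℕ) : ℝ) ≤ n := by exact_mod_cast Nat.mul_div_le n m
  have hm2 : (m : ℝ) ≤ ε / 2 * n := by
    rw [div_le_iff₀ hε] at hnm
    linarith
  simp only [Real.norm_eq_abs, Nat.abs_cast]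
  calc |b n| ≤ |b (m * (n / m))| + |b n - b (m * (n / m))| := by
        linarith [abs_sub_abs_le_abs_sub (b n) (b (m * (n / m)))]
    _ ≤ ε / 2 * n + m := by linarith [mul_le_mul_of_nonneg_left hmq (half_pos hε).le]
    _ ≤ ε * n := by linarith

namespace InfiniteWord

section Words

variable {α : Type*}

def block (x : ℕ → α) (L j : ℕ) : Fin L → α := fun i => x (L * j + i)

@[simp]
lemma length_pref (x : ℕ → α) (n : ℕ) : (pref x n).length = n := by
  simp [pref]

lemma pref_add (x : ℕ → α) (a b : ℕ) :
    pref x (a + b) = pref x a ++ pref (fun i => x (a + i)) b := by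
  simp [pref, List.range_add, Function.comp_def]

lemma pref_prefix (x : ℕ → α) {n m : ℕ} (h : n ≤ m) : pref x n <+: pref x m := by
  obtain ⟨d, rfl⟩ := Nat.exists_eq_add_of_le h
  rw [pref_add]
  exact List.prefix_append _ _

lemma ofFn_block (x : ℕ → α) (L j : ℕ) :
    List.ofFn (block x L j) = pref (fun i => x (L * j + i)) L := by
  apply List.ext_getElem <;> simp [pref, block]

lemma pref_mul_succ (x : ℕ → α) (L q : ℕ) :
    pref x (L * (q + 1)) = pref x (L * q) ++ List.ofFn (block x L q) := by
  rw [ofFn_block, mul_add_one, pref_add]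

lemma take_drop_pref (x : ℕ → α) {a t n : ℕ} (h : a + t ≤ n) :
    ((pref x n).drop a).take t = pref (fun i => x (a + i)) t := by
  apply List.ext_getElem
  · simp; omega
  · intro i _ _
    simp [pref]

def subblocksEquiv (m t : ℕ) : (Fin (m * t) → α) ≃ (Fin m → Fin t → α) :=
  (finProdFinEquiv.arrowCongr (Equiv.refl α)).symm.trans (Equiv.curry _ _ _)

lemma subblocksEquiv_block (x : ℕ → α) (m t j : ℕ) (s : Fin m) :
    subblocksEquiv m t (block x (m * t) j) s = block x t (m * j + s) := by
  funext i
  change x (m * t * j + (finProdFinEquiv (s, i) : ℕ)) = x (t * (m * j + s) + i)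
  rw [finProdFinEquiv_apply_val]
  ring_nf

lemma sum_range_mul_block {M : Type*} [AddCommMonoid M] (x : ℕ → α) (m t q : ℕ)
    (g : (Fin t → α) → M) :
    ∑ i ∈ range (m * q), g (block x t i)
      = ∑ j ∈ range q, ∑ s, g (subblocksEquiv m t (block x (m * t) j) s) := by
  induction q with
  | zero => simp
  | succ q ih =>
    rw [mul_add_one, sum_range_add, ih, sum_range_succ]
    simp [subblocksEquiv_block, Fin.sum_univ_eq_sum_range (fun s => g (block x t (m * q + s)))]

lemma card_filter_lt_abs_sum_subblocks_le [Fintype α] {t : ℕ}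
    {Y : (Fin t → α) → ℝ} (hY : ∑ v, Y v = 0) (hY1 : ∀ v, |Y v| ≤ 1) {m : ℕ} (hm : 0 < m)
    {ε : ℝ} (hε : 0 < ε) :
    (#{w : Fin (m * t) → α | ε * m < |∑ s, Y (subblocksEquiv m t w s)|} : ℝ)
      ≤ 3 * (Fintype.card α : ℝ) ^ (m * t) / (ε ^ 4 * m ^ 2) := by
  rw [card_equiv (subblocksEquiv m t) (t := {ω | ε * m < |∑ s, Y (ω s)|}) (by simp)]
  simpa [Fintype.card_fun, ← pow_mul, mul_comm t m] using
    card_filter_lt_abs_sum_apply_le hY hY1 hm hε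

end Words

section Occurrences

variable {α : Type*} [DecidableEq α]

lemma occCount_eq_card (w u : List α) :
    occCount w u = #{i ∈ range (w.length + 1 - u.length) | (w.drop i).take u.length = u} :=
  rfl

lemma alocc_pref_mul {L : ℕ} (hL : 0 < L) (x : ℕ → α) (f : Fin L → α) (n : ℕ) :
    alocc (pref x (L * n)) (List.ofFn f) = #{j ∈ range n | block x L j = f} := by
  rw [alocc, List.length_ofFn, length_pref, Nat.mul_div_cancel_left n hL]
  change #{j ∈ range n | _} = _
  refine congrArg card (filter_congr fun j hj => ?_)
  rw [mem_range] at hj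
  rw [mul_comm j L, take_drop_pref x (by nlinarith), ← ofFn_block, List.ofFn_inj]

lemma occCount_le_of_prefix {w₁ w₂ : List α} (h : w₁ <+: w₂) (u : List α) :
    occCount w₁ u ≤ occCount w₂ u := by
  obtain ⟨t, rfl⟩ := h
  simp only [occCount_eq_card]
  refine card_le_card fun i hi => ?_
  simp only [mem_filter, mem_range, List.length_append] at hi ⊢
  refine ⟨by omega, ?_⟩
  rw [List.take_drop_append_of_add_le (by omega)]
  exact hi.2

lemma occCount_append_le (w₁ w₂ u : List α) :
    occCount (w₁ ++ w₂) u ≤ occCount w₁ u + occCount w₂ u + u.length := by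
  simp only [occCount_eq_card]
  set S₁ := {i ∈ range (w₁.length + 1 - u.length) | (w₁.drop i).take u.length = u}
  set S₂ := {i ∈ range (w₂.length + 1 - u.length) | (w₂.drop i).take u.length = u}
  have hsub : {i ∈ range ((w₁ ++ w₂).length + 1 - u.length) |
      ((w₁ ++ w₂).drop i).take u.length = u}
      ⊆ S₁ ∪ S₂.map (addLeftEmbedding w₁.length) ∪ Ico (w₁.length - u.length) w₁.length := by
    intro i hi
    simp only [mem_filter, mem_range, List.length_append] at hi
    simp only [S₁, S₂, mem_union, mem_filter, mem_range, Finset.mem_map, addLeftEmbedding_apply,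
      mem_Ico]
    by_cases h₁ : i + u.length ≤ w₁.length
    · exact Or.inl (Or.inl ⟨by omega, (List.take_drop_append_of_add_le h₁).symm.trans hi.2⟩)
    by_cases h₂ : w₁.length ≤ i
    · refine Or.inl (Or.inr ⟨i - w₁.length, ⟨by omega, ?_⟩, by omega⟩)
      rw [← List.drop_append_of_length_le h₂]
      exact hi.2
    · exact Or.inr ⟨by omega, by omega⟩
  calc _ ≤ _ := card_le_card hsub
    _ ≤ #S₁ + #(S₂.map (addLeftEmbedding w₁.length)) + #(Ico (w₁.length - u.length) w₁.length) :=
        (card_union_le _ _).trans (by grw [card_union_le])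
    _ ≤ #S₁ + #S₂ + u.length := by simp only [card_map, Nat.card_Ico]; omega

lemma occCount_le_length (w : List α) {u : List α} (hu : u ≠ []) : occCount w u ≤ w.length := by
  have : 0 < u.length := List.length_pos_iff.mpr hu
  rw [occCount_eq_card]
  exact (card_filter_le _ _).trans (by simp; omega)

lemma alocc_le_occCount (w : List α) {u : List α} (hu : u ≠ []) : alocc w u ≤ occCount w u := by
  have hℓ : 0 < u.length := List.length_pos_iff.mpr hu
  rw [occCount_eq_card]
  change #{i ∈ range (w.length / u.length) | _} ≤ _
  refine card_le_card_of_injOn (· * u.length) (fun i hi => ?_) (fun i _ j _ h => ?_)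
  · simp only [coe_filter, mem_range, Set.mem_ofPred_eq] at hi ⊢
    have := (Nat.le_div_iff_mul_le hℓ).1 hi.1
    exact ⟨by rw [Nat.succ_mul] at this; omega, hi.2⟩
  · exact Nat.eq_of_mul_eq_mul_right hℓ h

lemma occCount_pref_le_sum_block (x : ℕ → α) {L : ℕ} (hL : 0 < L) {u : List α} (hu : u ≠ [])
    (n : ℕ) :
    occCount (pref x n) u
      ≤ ∑ j ∈ range (n / L + 1), occCount (List.ofFn (block x L j)) u + (n / L + 1) * u.length := by
  refine (occCount_le_of_prefix (pref_prefix x (Nat.lt_mul_div_succ n hL).le) u).trans ?_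
  induction n / L + 1 with
  | zero => simp [pref, occCount_eq_card, hu]
  | succ q ih =>
    rw [pref_mul_succ, sum_range_succ]
    grw [occCount_append_le, ih]
    ring_nf
    omega

lemma isBoundedUnder_occCount_div (x : ℕ → α) {u : List α} (hu : u ≠ []) :
    IsBoundedUnder (· ≤ ·) atTop fun n => (occCount (pref x n) u : ℝ) / n :=
  isBoundedUnder_of ⟨1, fun n => div_le_one_of_le₀
    (by exact_mod_cast (occCount_le_length _ hu).trans (length_pref x n).le) n.cast_nonneg⟩

end Occurrences

section Patterns

variable {α : Type*} [Fintype α] [DecidableEq α]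

lemma card_filter_take_drop_ofFn_eq {L r : ℕ} (u : List α) (h : r + u.length ≤ L) :
    #{f : Fin L → α | ((List.ofFn f).drop r).take u.length = u}
      = Fintype.card α ^ (L - u.length) := by
  induction L generalizing r u with
  | zero =>
    obtain ⟨rfl, hu⟩ : r = 0 ∧ u.length = 0 := by omega
    simp [List.length_eq_zero_iff.1 hu]
  | succ L ih =>
    rw [card_filter, sum_pi_fin_succ]
    simp only [List.ofFn_succ, Fin.cons_zero, Fin.cons_succ]
    rcases r with _ | r
    · rcases u with _ | ⟨c, u⟩
      · simp [pow_succ']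
      · simp only [List.drop_zero, List.length_cons, List.take_succ_cons, List.cons.injEq]
        rw [Fintype.sum_eq_single c fun a ha => by simp [ha]]
        simpa using ih (r := 0) u (by simp at h; omega)
    · simp only [List.drop_succ_cons, ← card_filter]
      rw [ih u (by omega), sum_const, card_univ, smul_eq_mul, ← pow_succ']
      congr 1
      omega

lemma sum_occCount_ofFn {L : ℕ} (u : List α) (h : u.length ≤ L) :
    ∑ f : Fin L → α, occCount (List.ofFn f) u
      = (L + 1 - u.length) * Fintype.card α ^ (L - u.length) := by
  simp only [occCount_eq_card, List.length_ofFn, card_filter]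
  rw [sum_comm, ← smul_eq_mul]
  nth_rw 2 [← card_range (L + 1 - u.length)]
  rw [← sum_const]
  refine sum_congr rfl fun r hr => ?_
  rw [← card_filter, card_filter_take_drop_ofFn_eq u (by simp at hr; omega)]

lemma sum_occCount_ofFn_mul_le {L : ℕ} {u : List α} (hu : u ≠ []) (h : u.length ≤ L) :
    (∑ f : Fin L → α, occCount (List.ofFn f) u) * Fintype.card α ^ u.length
      ≤ L * Fintype.card α ^ L := by
  have : 0 < u.length := List.length_pos_iff.mpr hu
  rw [sum_occCount_ofFn u h, mul_assoc, ← pow_add, Nat.sub_add_cancel h]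
  exact Nat.mul_le_mul_right _ (by omega)

end Patterns

section Normality

variable {α : Type*} [Fintype α] [DecidableEq α]

def IsNormal (x : ℕ → α) : Prop :=
  ∀ ℓ : ℕ, 0 < ℓ → ∀ v : List α, v.length = ℓ →
    Tendsto (fun n : ℕ => (alocc (pref x (ℓ * n)) v : ℝ) / n) atTop
      (𝓝 (1 / (Fintype.card α : ℝ) ^ ℓ))

def HotSpotBound (x : ℕ → α) (C : ℝ) : Prop :=
  ∀ ℓ : ℕ, 0 < ℓ → ∀ u : List α, u.length = ℓ →
    limsup (fun n : ℕ => (occCount (pref x n) u : ℝ) / n) atTop < C / (Fintype.card α : ℝ) ^ ℓ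

variable {x : ℕ → α} {C : ℝ}

lemma IsNormal.tendsto_sum_block_div (hx : IsNormal x) {L : ℕ} (hL : 0 < L)
    (g : (Fin L → α) → ℝ) :
    Tendsto (fun q : ℕ => (∑ j ∈ range q, g (block x L j)) / q) atTop
      (𝓝 ((∑ f, g f) / (Fintype.card α : ℝ) ^ L)) := by
  have hfiber (q : ℕ) : ∑ j ∈ range q, g (block x L j)
      = ∑ f, (alocc (pref x (L * q)) (List.ofFn f) : ℝ) * g f := by
    rw [← sum_fiberwise' (range q) (block x L) g]
    simp [alocc_pref_mul hL]
  simp only [hfiber, sum_div]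
  refine tendsto_finsetSum _ fun f _ => ?_
  convert (hx L hL (List.ofFn f) (List.length_ofFn)).mul_const (g f) using 2 <;> ring

lemma IsNormal.eventually_occCount_mul_le (hx : IsNormal x) {u : List α} (hu : u ≠ []) :
    ∀ᶠ n in atTop, occCount (pref x n) u * Fintype.card α ^ u.length ≤ 6 * n := by
  set ℓ := u.length
  set N := Fintype.card α
  have hℓ : 0 < ℓ := List.length_pos_iff.2 hu
  have hN : 0 < N := Fintype.card_pos_iff.2 ⟨u.head hu⟩
  -- with blocks this long, occurrences straddling two blocks are as rare as `u` itself
  set L := ℓ * N ^ ℓ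
  have hL : ℓ ≤ L := Nat.le_mul_of_pos_right ℓ (by positivity)
  have hsum : ∑ f : Fin L → α, occCount (List.ofFn f) u ≤ ℓ * N ^ L := by
    have := sum_occCount_ofFn_mul_le hu hL
    refine Nat.le_of_mul_le_mul_right (this.trans_eq ?_) (by positivity : 0 < N ^ ℓ)
    change ℓ * N ^ ℓ * N ^ L = _
    ring
  have hmean : (∑ f : Fin L → α, (occCount (List.ofFn f) u : ℝ)) / (N : ℝ) ^ L < ℓ + 1 := by
    have : (0 : ℝ) < (N : ℝ) ^ L := by positivity
    rw [div_lt_iff₀ this]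
    calc ∑ f : Fin L → α, (occCount (List.ofFn f) u : ℝ) ≤ ℓ * (N : ℝ) ^ L := by
          exact_mod_cast hsum
      _ < (ℓ + 1) * (N : ℝ) ^ L := by linarith
  have hblocks : ∀ᶠ q in atTop,
      ∑ j ∈ range q, occCount (List.ofFn (block x L j)) u ≤ (ℓ + 1) * q := by
    filter_upwards [(hx.tendsto_sum_block_div (by omega) _).eventually_lt_const hmean,
      eventually_gt_atTop 0] with q hq hq0
    rw [div_lt_iff₀ (by positivity)] at hq
    exact_mod_cast hq.le
  have hq : Tendsto (fun n => n / L + 1) atTop atTop :=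
    tendsto_atTop_mono (fun n => Nat.le_succ _) (Nat.tendsto_div_const_atTop (by omega))
  filter_upwards [hq.eventually hblocks, eventually_ge_atTop L] with n hn hnL
  have hqL : L * (n / L + 1) ≤ 2 * n := by
    rw [mul_add_one]
    have := Nat.mul_div_le n L
    omega
  have hocc : occCount (pref x n) u ≤ 3 * ℓ * (n / L + 1) := by
    have := occCount_pref_le_sum_block x (L := L) (by omega) hu n
    nlinarith
  calc occCount (pref x n) u * N ^ ℓ ≤ 3 * ℓ * (n / L + 1) * N ^ ℓ := Nat.mul_le_mul_right _ hocc
    _ = 3 * (L * (n / L + 1)) := by ring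
    _ ≤ 6 * n := by omega

theorem IsNormal.hotSpotBound (hx : IsNormal x) : HotSpotBound x 7 := by
  rintro ℓ hℓ u rfl
  have hu : u ≠ [] := List.ne_nil_of_length_pos hℓ
  have hK : (0 : ℝ) < (Fintype.card α : ℝ) ^ u.length :=
    pow_pos (Nat.cast_pos.2 (Fintype.card_pos_iff.2 ⟨u.head hu⟩)) _
  refine lt_of_le_of_lt (b := 6 / (Fintype.card α : ℝ) ^ u.length)
    (limsup_le_of_le (isCoboundedUnder_le_of_le atTop fun n => by positivity) ?_)
    (div_lt_div_of_pos_right (by norm_num) hK)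
  filter_upwards [hx.eventually_occCount_mul_le hu] with n hn
  refine div_le_of_le_mul₀ n.cast_nonneg (by positivity) ?_
  rw [div_mul_eq_mul_div, le_div_iff₀ hK]
  exact_mod_cast hn

lemma HotSpotBound.pos (h : HotSpotBound x C) : 0 < C := by
  have hN : (0 : ℝ) < Fintype.card α := Nat.cast_pos.2 (Fintype.card_pos_iff.2 ⟨x 0⟩)
  have h0 : 0 ≤ limsup (fun n : ℕ => (occCount (pref x n) [x 0] : ℝ) / n) atTop :=
    le_limsup_of_frequently_le (Frequently.of_forall fun n => by positivity)
      (isBoundedUnder_occCount_div x (List.cons_ne_nil _ _))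
  simpa [hN] using h0.trans_lt (h 1 one_pos [x 0] rfl)

lemma HotSpotBound.eventually_card_block_mem_le (h : HotSpotBound x C) {L : ℕ} (hL : 0 < L)
    (B : Finset (Fin L → α)) :
    ∀ᶠ q in atTop, (#{j ∈ range q | block x L j ∈ B} : ℝ)
      ≤ #B * (C * L / (Fintype.card α : ℝ) ^ L) * q := by
  have hword (f : Fin L → α) :
      ∀ᶠ q in atTop, (alocc (pref x (L * q)) (List.ofFn f) : ℝ)
        ≤ C * L / (Fintype.card α : ℝ) ^ L * q := by
    have hne : List.ofFn f ≠ [] := List.ne_nil_of_length_pos (by simpa using hL)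
    have hev := eventually_lt_of_limsup_lt (h L hL (List.ofFn f) (List.length_ofFn))
      (isBoundedUnder_occCount_div x hne)
    filter_upwards [(tendsto_id.const_mul_atTop' hL).eventually hev, eventually_gt_atTop 0]
      with q hq hq0
    rw [id, div_lt_iff₀ (by positivity), Nat.cast_mul] at hq
    calc (alocc (pref x (L * q)) (List.ofFn f) : ℝ)
        ≤ occCount (pref x (L * q)) (List.ofFn f) := by exact_mod_cast alocc_le_occCount _ hne
      _ ≤ _ := by
        linarith [show C / (Fintype.card α : ℝ) ^ L * (L * q)
          = C * L / (Fintype.card α : ℝ) ^ L * q by ring]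
  filter_upwards [(eventually_all_finset B).2 fun f _ => hword f] with q hq
  rw [card_eq_sum_card_fiberwise (f := block x L) (s := {j ∈ range q | block x L j ∈ B}) (t := B)
    fun j hj => (mem_filter.1 hj).2, Nat.cast_sum]
  calc ∑ f ∈ B, (#{j ∈ {j ∈ range q | block x L j ∈ B} | block x L j = f} : ℝ)
      = ∑ f ∈ B, (alocc (pref x (L * q)) (List.ofFn f) : ℝ) := by
        refine sum_congr rfl fun f hf => ?_
        rw [alocc_pref_mul hL, filter_filter]
        congr 3
        ext j
        exact ⟨fun h => h.2, fun h => ⟨h ▸ hf, h⟩⟩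
    _ ≤ ∑ _f ∈ B, C * L / (Fintype.card α : ℝ) ^ L * q := sum_le_sum hq
    _ = _ := by rw [sum_const, nsmul_eq_mul]; ring

lemma HotSpotBound.exists_eventually_abs_sum_le (h : HotSpotBound x C) {t : ℕ} (ht : 0 < t)
    {Y : (Fin t → α) → ℝ} (hY : ∑ v, Y v = 0) (hY1 : ∀ v, |Y v| ≤ 1) {ε : ℝ} (hε : 0 < ε) :
    ∃ m > 0, ∀ᶠ q in atTop, |∑ i ∈ range (m * q), Y (block x t i)| ≤ ε * (m * q : ℕ) := by
  obtain ⟨m, hmsmall, hm⟩ :=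
    (((tendsto_const_div_atTop_nhds_zero_nat (3 * C * t / (ε / 2) ^ 4)).eventually
      (gt_mem_nhds (half_pos hε))).and (eventually_gt_atTop 0)).exists
  refine ⟨m, hm, ?_⟩
  set P : ℝ := (Fintype.card α : ℝ) ^ (m * t)
  have hP : 0 < P := pow_pos (Nat.cast_pos.2 (Fintype.card_pos_iff.2 ⟨x 0⟩)) _
  set D : (Fin (m * t) → α) → ℝ := fun w => ∑ s, Y (subblocksEquiv m t w s)
  set B : Finset (Fin (m * t) → α) := {w | ε / 2 * m < |D w|}
  have hBc : #B * (C * (m * t : ℕ) / P) ≤ ε / 2 :=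
    calc #B * (C * (m * t : ℕ) / P) ≤ 3 * P / ((ε / 2) ^ 4 * m ^ 2) * (C * (m * t : ℕ) / P) :=
          mul_le_mul_of_nonneg_right (card_filter_lt_abs_sum_subblocks_le hY hY1 hm (half_pos hε))
            (by have := h.pos; positivity)
      _ = 3 * C * t / (ε / 2) ^ 4 / m := by field_simp; push_cast; ring
      _ ≤ ε / 2 := hmsmall.le
  have hD (w) : |D w| ≤ ε / 2 * m + m * (if w ∈ B then 1 else 0) := by
    by_cases hw : w ∈ B
    · simp only [D, hw, if_true]
      linarith [abs_sum_apply_le hY1 (subblocksEquiv m t w),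
        mul_nonneg (half_pos hε).le m.cast_nonneg]
    · simp only [hw, if_false]
      simpa [B] using hw
  filter_upwards [h.eventually_card_block_mem_le (by positivity : 0 < m * t) B] with q hq
  rw [sum_range_mul_block]
  calc |∑ j ∈ range q, D (block x (m * t) j)| ≤ ∑ j ∈ range q, |D (block x (m * t) j)| :=
        abs_sum_le_sum_abs _ _
    _ ≤ ∑ j ∈ range q, (ε / 2 * m + m * (if block x (m * t) j ∈ B then 1 else 0)) :=
        sum_le_sum fun j _ => hD _
    _ = ε / 2 * m * q + m * #{j ∈ range q | block x (m * t) j ∈ B} := by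
        rw [sum_add_distrib, sum_const, card_range, nsmul_eq_mul, ← mul_sum, sum_boole]
        ring
    _ ≤ ε / 2 * m * q + m * (#B * (C * (m * t : ℕ) / P) * q) := by gcongr
    _ ≤ ε * (m * q : ℕ) := by
        have := mul_le_mul_of_nonneg_left hBc (by positivity : (0 : ℝ) ≤ m * q)
        push_cast at this ⊢
        linarith

theorem HotSpotBound.isNormal (h : HotSpotBound x C) : IsNormal x := by
  rintro t ht v rfl
  set p : ℝ := 1 / (Fintype.card α : ℝ) ^ v.length
  have hN : (1 : ℝ) ≤ Fintype.card α := Nat.one_le_cast.2 (Fintype.card_pos_iff.2 ⟨x 0⟩)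
  have hp : 0 < p := by positivity
  have hp1 : p ≤ 1 := div_le_one_of_le₀ (one_le_pow₀ hN) (by positivity)
  set Y : (Fin v.length → α) → ℝ := fun w => (if w = v.get then 1 else 0) - p
  have hY : ∑ w, Y w = 0 := by
    simp [Y, sum_sub_distrib, p, (zero_lt_one.trans_le hN).ne']
  have hY1 (w) : |Y w| ≤ 1 := by
    simp only [Y, abs_le]
    constructor <;> split_ifs <;> linarith
  set b : ℕ → ℝ := fun n => ∑ i ∈ range n, Y (block x v.length i)
  have hb (n : ℕ) : |b (n + 1) - b n| ≤ 1 := by simpa [b, sum_range_succ] using hY1 _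
  have hlim := (isLittleO_natCast_of_multiples hb fun ε hε =>
    h.exists_eventually_abs_sum_le ht hY hY1 hε).tendsto_div_nhds_zero
  have halocc (n : ℕ) : (alocc (pref x (v.length * n)) v : ℝ) = b n + n * p := by
    have := alocc_pref_mul ht x v.get n
    rw [List.ofFn_get] at this
    simp [this, b, Y, sum_sub_distrib]
  refine (zero_add p ▸ hlim.add_const p).congr' ?_
  filter_upwards [eventually_gt_atTop 0] with n hn
  rw [halocc, add_div, mul_div_cancel_left₀ _ (by positivity)]

theorem isNormal_iff_exists_hotSpotBound (x : ℕ → α) :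
    IsNormal x ↔ ∃ C, 0 < C ∧ HotSpotBound x C :=
  ⟨fun hx => ⟨7, by norm_num, hx.hotSpotBound⟩, fun ⟨_, _, h⟩ => h.isNormal⟩

end Normality

end InfiniteWord

theorem stmt16_general (k : ℕ) (x : ℕ → Fin k) :
    (∀ ℓ : ℕ, 0 < ℓ → ∀ v : List (Fin k), v.length = ℓ →
      Tendsto (fun n : ℕ => (alocc (pref x (ℓ * n)) v : ℝ) / (n : ℝ)) atTop
        (𝓝 (1 / (k : ℝ) ^ ℓ)))
    ↔ ∃ C : ℝ, 0 < C ∧ ∀ ℓ : ℕ, 0 < ℓ → ∀ u : List (Fin k), u.length = ℓ →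
        Filter.limsup (fun n : ℕ => (occCount (pref x n) u : ℝ) / (n : ℝ)) atTop
          < C / (k : ℝ) ^ ℓ := by
  simpa [InfiniteWord.IsNormal, InfiniteWord.HotSpotBound] using
    InfiniteWord.isNormal_iff_exists_hotSpotBound x

theorem stmt16 (k : ℕ) (hk : 0 < k) (x : ℕ → Fin k) :
    (∀ ℓ : ℕ, 0 < ℓ → ∀ v : List (Fin k), v.length = ℓ →
      Tendsto (fun n : ℕ => (alocc (pref x (ℓ * n)) v : ℝ) / (n : ℝ)) atTop
        (𝓝 (1 / (k : ℝ) ^ ℓ)))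
    ↔ ∃ C : ℝ, 0 < C ∧ ∀ ℓ : ℕ, 0 < ℓ → ∀ u : List (Fin k), u.length = ℓ →
        Filter.limsup (fun n : ℕ => (occCount (pref x n) u : ℝ) / (n : ℝ)) atTop
          < C / (k : ℝ) ^ ℓ :=
  stmt16_general k x
end

section
/- If an infinite word u over alphabet A is normal, then for every finite prefix p of u, the tail of u after removing p is also normal. -/
/-!
Write `ℓ = |v|` and `L = q ℓ + r` with `r < ℓ`. The aligned occurrences of `v` in the tail are
the occurrences of `v` in `u` at the positions `j ℓ + r` with `j ≥ q`, and discarding the first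
`q` of them does not change a density. Split the indices `j` by their residue `s` modulo `m + 1`.
For `s < m` the window at `j ℓ + r` lies inside an aligned block of length `(m + 1) ℓ`, at offset
`s ℓ + r`, so its frequency is the sum over the `k ^ (m ℓ)` completions of `v` to such a block,
each of frequency `k ^ (-(m + 1) ℓ)`, that is `k ^ (-ℓ)`. The remaining residue class has
density at most `1 / (m + 1)`, which vanishes as `m → ∞`.
-/

open Filter Topology

open Finset

section Density

variable {P : ℕ → Prop} [DecidablePred P] {c : ℝ}

def HasDensity (P : ℕ → Prop) [DecidablePred P] (c : ℝ) : Prop :=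
  Tendsto (fun n : ℕ => (Nat.count P n : ℝ) / n) atTop (𝓝 c)

lemma HasDensity.congr {Q : ℕ → Prop} [DecidablePred Q] (hP : HasDensity P c)
    (h : ∀ n, P n ↔ Q n) : HasDensity Q c := by
  obtain rfl : P = Q := funext fun n => propext (h n)
  convert hP

lemma HasDensity.tendsto_count_comp {g : ℕ → ℕ} {d : ℝ} (hP : HasDensity P c)
    (hg : Tendsto g atTop atTop) (hgd : Tendsto (fun n => (g n : ℝ) / n) atTop (𝓝 d)) :
    Tendsto (fun n => (Nat.count P (g n) : ℝ) / n) atTop (𝓝 (c * d)) := by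
  refine ((hP.comp hg).mul hgd).congr' ?_
  filter_upwards [hg.eventually_gt_atTop 0] with n hn
  exact div_mul_div_cancel₀ (by positivity)

lemma HasDensity.comp_add_left (hP : HasDensity P c) (q : ℕ) :
    HasDensity (fun i => P (q + i)) c := by
  have hshift : Tendsto (fun n : ℕ => ((q + n : ℕ) : ℝ) / n) atTop (𝓝 1) := by
    have := (tendsto_const_div_atTop_nhds_zero_nat (q : ℝ)).add_const 1
    rw [zero_add] at this
    refine this.congr' ?_
    filter_upwards [eventually_gt_atTop 0] with n hn
    push_cast
    field_simp
  have := (hP.tendsto_count_comp (tendsto_atTop_mono (Nat.le_add_left · q) tendsto_id) hshift).sub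
    (tendsto_const_div_atTop_nhds_zero_nat (Nat.count P q : ℝ))
  rw [mul_one, sub_zero] at this
  refine this.congr fun n => ?_
  rw [Nat.count_add]
  push_cast
  ring

lemma Nat.count_mul_eq_sum_residues (P : ℕ → Prop) [DecidablePred P] (m T : ℕ) :
    Nat.count P (T * m) = ∑ s ∈ range m, Nat.count (fun t => P (t * m + s)) T := by
  induction T with
  | zero => simp
  | succ T ih =>
    rw [Nat.succ_mul, Nat.count_add, ih, Nat.count_eq_card_filter_range, card_filter,
      ← sum_add_distrib]
    refine sum_congr rfl fun s _ => ?_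
    rw [Nat.count_succ]

lemma tendsto_natCast_div_const_div_self (d : ℕ) :
    Tendsto (fun n : ℕ => ((n / d : ℕ) : ℝ) / n) atTop (𝓝 (1 / d)) := by
  refine ((tendsto_nat_floor_mul_div_atTop (by positivity)).comp
    tendsto_natCast_atTop_atTop).congr fun n => ?_
  simp only [Function.comp_apply, one_div_mul_eq_div, Nat.floor_div_eq_div]

theorem HasDensity.of_residues
    (h : ∀ m s, s < m → HasDensity (fun t => P (t * (m + 1) + s)) c) : HasDensity P c := by
  set C : ℕ → ℕ → ℕ → ℕ := fun m s T => Nat.count (fun t => P (t * (m + 1) + s)) T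
  have lower : ∀ m N, ∑ s ∈ range m, C m s (N / (m + 1)) ≤ Nat.count P N := fun m N =>
    calc ∑ s ∈ range m, C m s (N / (m + 1))
        ≤ ∑ s ∈ range (m + 1), C m s (N / (m + 1)) :=
          sum_le_sum_of_subset (range_subset_range.2 m.le_succ)
      _ = Nat.count P (N / (m + 1) * (m + 1)) := (Nat.count_mul_eq_sum_residues P _ _).symm
      _ ≤ Nat.count P N := Nat.count_monotone P (Nat.div_mul_le_self N _)
  have upper : ∀ m N,
      Nat.count P N ≤ ∑ s ∈ range m, C m s (N / (m + 1) + 1) + (N / (m + 1) + 1) := fun m N =>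
    calc Nat.count P N
        ≤ Nat.count P ((N / (m + 1) + 1) * (m + 1)) := by
          rw [mul_comm]; exact Nat.count_monotone P (Nat.lt_mul_div_succ N m.succ_pos).le
      _ = ∑ s ∈ range (m + 1), C m s (N / (m + 1) + 1) := Nat.count_mul_eq_sum_residues P _ _
      _ ≤ _ := by rw [sum_range_succ]; exact Nat.add_le_add_left (Nat.count_le _) _
  have hg : ∀ m : ℕ, Tendsto (· / (m + 1)) atTop atTop := fun m =>
    Nat.tendsto_div_const_atTop m.succ_ne_zero
  have hrate1 : ∀ m : ℕ, Tendsto (fun N : ℕ => ((N / (m + 1) + 1 : ℕ) : ℝ) / N) atTop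
      (𝓝 (1 / (m + 1 : ℕ))) := fun m => by
    have := (tendsto_natCast_div_const_div_self (m + 1)).add tendsto_one_div_atTop_nhds_zero_nat
    rw [add_zero] at this
    exact this.congr fun N => by push_cast; rw [add_div]
  have lim_lower : ∀ m : ℕ,
      Tendsto (fun N : ℕ => ((∑ s ∈ range m, C m s (N / (m + 1)) : ℕ) : ℝ) / N) atTop
        (𝓝 (m / (m + 1) * c)) := fun m => by
    have := tendsto_finsetSum (range m) fun s hs =>
      (h m s (mem_range.1 hs)).tendsto_count_comp (hg m)
        (tendsto_natCast_div_const_div_self (m + 1))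
    rw [sum_const, card_range, nsmul_eq_mul] at this
    convert this using 1
    · ext N; push_cast; rw [sum_div]
    · congr 1; push_cast; ring
  have lim_upper : ∀ m : ℕ, Tendsto (fun N : ℕ =>
      ((∑ s ∈ range m, C m s (N / (m + 1) + 1) + (N / (m + 1) + 1) : ℕ) : ℝ) / N)
      atTop (𝓝 (m / (m + 1) * c + 1 / (m + 1))) := fun m => by
    have := (tendsto_finsetSum (range m) fun s hs =>
      (h m s (mem_range.1 hs)).tendsto_count_comp
        (tendsto_atTop_mono (fun N => (N / (m + 1)).le_succ) (hg m)) (hrate1 m)).add (hrate1 m)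
    rw [sum_const, card_range, nsmul_eq_mul] at this
    convert this using 1
    · ext N; push_cast; rw [add_div, sum_div]
    · congr 1; push_cast; ring
  refine tendsto_order.2 ⟨fun a ha => ?_, fun b hb => ?_⟩
  · have hm : Tendsto (fun m : ℕ => (m : ℝ) / (m + 1) * c) atTop (𝓝 c) := by
      simpa using (tendsto_natCast_div_add_atTop (1 : ℝ)).mul_const c
    obtain ⟨m, hm⟩ := (hm.eventually (lt_mem_nhds ha)).exists
    filter_upwards [(lim_lower m).eventually (lt_mem_nhds hm)] with N hN
    exact hN.trans_le (div_le_div_of_nonneg_right (Nat.cast_le.2 (lower m N)) N.cast_nonneg)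
  · have hm : Tendsto (fun m : ℕ => (m : ℝ) / (m + 1) * c + 1 / (m + 1)) atTop (𝓝 c) := by
      simpa using ((tendsto_natCast_div_add_atTop (1 : ℝ)).mul_const c).add
        tendsto_one_div_add_atTop_nhds_zero_nat
    obtain ⟨m, hm⟩ := (hm.eventually (gt_mem_nhds hb)).exists
    filter_upwards [(lim_upper m).eventually (gt_mem_nhds hm)] with N hN
    exact (div_le_div_of_nonneg_right (Nat.cast_le.2 (upper m N)) N.cast_nonneg).trans_lt hN

end Density

section Words

variable {α : Type*}

def window (u : ℕ → α) (p ℓ : ℕ) : List α := (List.range ℓ).map fun t => u (p + t)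

@[simp] lemma length_window (u : ℕ → α) (p ℓ : ℕ) : (window u p ℓ).length = ℓ := by
  simp [window]

lemma window_comp_add (u : ℕ → α) (L p ℓ : ℕ) :
    window (fun i => u (i + L)) p ℓ = window u (p + L) ℓ := by
  simp only [window, add_right_comm]

lemma take_drop_window (u : ℕ → α) (p : ℕ) {o ℓ M : ℕ} (h : o + ℓ ≤ M) :
    ((window u p M).drop o).take ℓ = window u (p + o) ℓ := by
  refine List.ext_getElem (by simp; omega) fun j h₁ h₂ => ?_
  simp [window, add_assoc]

lemma take_drop_pref (u : ℕ → α) {a ℓ N : ℕ} (h : a + ℓ ≤ N) :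
    ((pref u N).drop a).take ℓ = window u a ℓ := by
  simpa [window, pref] using take_drop_window u 0 h

variable [DecidableEq α]

lemma alocc_pref_eq_count (u : ℕ → α) {v : List α} (hv : 0 < v.length) (n : ℕ) :
    alocc (pref u (v.length * n)) v =
      Nat.count (fun i => window u (i * v.length) v.length = v) n := by
  have hlen : (pref u (v.length * n)).length / v.length = n := by
    simp [pref, Nat.mul_div_cancel_left n hv]
  rw [alocc, hlen, Nat.count_eq_card_filter_range]
  change List.length _ = Multiset.card (Multiset.filter _ (Multiset.range n))
  rw [Multiset.range, Multiset.filter_coe, Multiset.coe_card]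
  congr 1
  refine List.filter_congr fun i hi => ?_
  rw [take_drop_pref u (by nlinarith [List.mem_range.1 hi])]

lemma card_filter_eq_append_append [Fintype α] {W v : List α} {o M : ℕ} (hW : W.length = M)
    (h : o + v.length ≤ M) :
    #{p : List.Vector α o × List.Vector α (M - (o + v.length)) |
        W = p.1.toList ++ v ++ p.2.toList} =
      if (W.drop o).take v.length = v then 1 else 0 := by
  split_ifs with hmid
  · refine card_eq_one.2
      ⟨(⟨W.take o, by simp; omega⟩, ⟨W.drop (o + v.length), by simp; omega⟩), ?_⟩
    ext ⟨a, b⟩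
    have hsplit : W = W.take o ++ v ++ W.drop (o + v.length) := by
      conv_lhs => rw [← W.take_append_drop o, ← (W.drop o).take_append_drop v.length]
      rw [hmid, List.drop_drop, List.append_assoc]
    simp only [mem_filter, mem_univ, true_and, mem_singleton]
    constructor
    · intro hab
      refine Prod.ext (List.Vector.toList_injective ?_) (List.Vector.toList_injective ?_)
      · simp [hab, List.append_assoc, List.take_left' a.toList_length]
      · change b.toList = W.drop (o + v.length)
        rw [hab, List.drop_left' (by simp)]
    · rintro ⟨⟩
      exact hsplit
  · refine card_eq_zero.2 (filter_eq_empty_iff.2 fun p _ hp => hmid ?_)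
    rw [hp, List.append_assoc, List.drop_left' (by simp), List.take_left' rfl]

lemma count_window_eq_sum [Fintype α] (u : ℕ → α) (v : List α) {M o : ℕ}
    (h : o + v.length ≤ M) (n : ℕ) :
    Nat.count (fun t => window u (t * M + o) v.length = v) n =
      ∑ p : List.Vector α o × List.Vector α (M - (o + v.length)),
        Nat.count (fun t => window u (t * M) M = p.1.toList ++ v ++ p.2.toList) n := by
  induction n with
  | zero => simp
  | succ n ih =>
    simp only [Nat.count_succ, sum_add_distrib, ← ih, ← card_filter]
    rw [card_filter_eq_append_append (length_window u _ M) h, take_drop_window u _ h]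

variable [Fintype α]

def IsNormal (u : ℕ → α) : Prop :=
  ∀ v : List α, 0 < v.length →
    HasDensity (fun t => window u (t * v.length) v.length = v) (1 / Fintype.card α ^ v.length)

lemma IsNormal.hasDensity_window_add {u : ℕ → α} (hu : IsNormal u) {v : List α}
    (hv : 0 < v.length) {M o : ℕ} (h : o + v.length ≤ M) :
    HasDensity (fun t => window u (t * M + o) v.length = v) (1 / Fintype.card α ^ v.length) := by
  have hα : 0 < Fintype.card α :=
    Fintype.card_pos_iff.2 ⟨v.head (List.ne_nil_of_length_pos hv)⟩
  have hext : ∀ p : List.Vector α o × List.Vector α (M - (o + v.length)),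
      HasDensity (fun t => window u (t * M) M = p.1.toList ++ v ++ p.2.toList)
        (1 / Fintype.card α ^ M) := fun p => by
    have hlen : (p.1.toList ++ v ++ p.2.toList).length = M := by simp; omega
    have := hu _ (by rw [hlen]; omega)
    rw [hlen] at this
    exact this
  unfold HasDensity
  convert tendsto_finsetSum univ fun p _ => hext p using 2
  · rw [count_window_eq_sum u v h]
    push_cast
    rw [sum_div]
  · rw [sum_const, card_univ, Fintype.card_prod, card_vector, card_vector, nsmul_eq_mul]
    push_cast
    rw [← pow_add]
    field_simp
    rw [← pow_add]
    congr 1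
    omega

theorem IsNormal.comp_add {u : ℕ → α} (hu : IsNormal u) (L : ℕ) :
    IsNormal fun i => u (i + L) := by
  intro v hv
  obtain ⟨q, r, hr, rfl⟩ : ∃ q r, r < v.length ∧ L = q * v.length + r :=
    ⟨L / v.length, L % v.length, Nat.mod_lt _ hv, (Nat.div_add_mod' L _).symm⟩
  have hres : ∀ m s, s < m → HasDensity
      (fun t => window u ((t * (m + 1) + s) * v.length + r) v.length = v)
      (1 / Fintype.card α ^ v.length) := fun m s hs => by
    have := hu.hasDensity_window_add hv (M := (m + 1) * v.length) (o := s * v.length + r)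
      (by nlinarith)
    refine this.congr fun t => ?_
    rw [show t * ((m + 1) * v.length) + (s * v.length + r) = (t * (m + 1) + s) * v.length + r by
      ring]
  refine ((HasDensity.of_residues (P := fun j => window u (j * v.length + r) v.length = v)
    hres).comp_add_left q).congr fun t => ?_
  rw [window_comp_add, show (q + t) * v.length + r = t * v.length + (q * v.length + r) by ring]

lemma isNormal_iff_tendsto_alocc {u : ℕ → α} :
    IsNormal u ↔ ∀ ℓ : ℕ, 0 < ℓ → ∀ v : List α, v.length = ℓ →
      Tendsto (fun n : ℕ => (alocc (pref u (ℓ * n)) v : ℝ) / n) atTop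
        (𝓝 (1 / (Fintype.card α : ℝ) ^ ℓ)) := by
  unfold IsNormal HasDensity
  refine ⟨fun hu ℓ hℓ v hv => ?_, fun hu v hv => ?_⟩
  · subst hv
    simpa only [alocc_pref_eq_count u hℓ] using hu v hℓ
  · simpa only [alocc_pref_eq_count u hv] using hu _ hv v rfl

end Words

theorem stmt19_general (k : ℕ) (u : ℕ → Fin k)
    (hu : ∀ ℓ : ℕ, 0 < ℓ → ∀ v : List (Fin k), v.length = ℓ →
      Tendsto (fun n : ℕ => (alocc (pref u (ℓ * n)) v : ℝ) / (n : ℝ)) atTop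
        (𝓝 (1 / (k : ℝ) ^ ℓ)))
    (L : ℕ) :
    ∀ ℓ : ℕ, 0 < ℓ → ∀ v : List (Fin k), v.length = ℓ →
      Tendsto (fun n : ℕ => (alocc (pref (fun i => u (i + L)) (ℓ * n)) v : ℝ) / (n : ℝ)) atTop
        (𝓝 (1 / (k : ℝ) ^ ℓ)) := by
  have hnormal : IsNormal u := isNormal_iff_tendsto_alocc.2 (by simpa only [Fintype.card_fin])
  simpa only [Fintype.card_fin] using isNormal_iff_tendsto_alocc.1 (hnormal.comp_add L)

theorem stmt19 (k : ℕ) (hk : 0 < k) (u : ℕ → Fin k)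
    (hu : ∀ ℓ : ℕ, 0 < ℓ → ∀ v : List (Fin k), v.length = ℓ →
      Tendsto (fun n : ℕ => (alocc (pref u (ℓ * n)) v : ℝ) / (n : ℝ)) atTop
        (𝓝 (1 / (k : ℝ) ^ ℓ)))
    (L : ℕ) :
    ∀ ℓ : ℕ, 0 < ℓ → ∀ v : List (Fin k), v.length = ℓ →
      Tendsto (fun n : ℕ => (alocc (pref (fun i => u (i + L)) (ℓ * n)) v : ℝ) / (n : ℝ)) atTop
        (𝓝 (1 / (k : ℝ) ^ ℓ)) :=
  stmt19_general k u hu L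
end
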